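/- arXiv:1102.4723 — 6 statements merged into one kernel-verified Lean document; each statement's English description precedes it below -/
import Mathlib

section
/- Let V be a finite-dimensional real inner product space and let A be a self-adjoint linear endomorphism of V. Then the endomorphism χ(A) := Ψ⁻(A) ∘ Ψ⁺(A)⁻¹ is self-adjoint (here Ψ⁺(A) is invertible because it is self-adjoint positive definite). -/
open scoped RealInnerProductSpace

/-- `Ψ⁺(A) := Σ_{n≥0} A^{2n}/(2n+1)!`, as a norm-convergent series of endomorphisms. -/
noncomputable def PsiPlus {V : Type*} [NormedAddCommGroup V] [NormedSpace ℝ V]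
    (A : V →L[ℝ] V) : V →L[ℝ] V :=
  ∑' n : ℕ, (((2 * n + 1).factorial : ℝ))⁻¹ • A ^ (2 * n)

/-- `Ψ⁻(A) := −Σ_{n≥0} A^{2n+1}/(2n+2)!`, as a norm-convergent series of endomorphisms. -/
noncomputable def PsiMinus {V : Type*} [NormedAddCommGroup V] [NormedSpace ℝ V]
    (A : V →L[ℝ] V) : V →L[ℝ] V :=
  -∑' n : ℕ, (((2 * n + 2).factorial : ℝ))⁻¹ • A ^ (2 * n + 1)

/-- `χ(A) := Ψ⁻(A) ∘ Ψ⁺(A)⁻¹`, where the inverse is taken in the ring of continuous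
endomorphisms (`Ψ⁺(A)` is invertible when `A` is self-adjoint, being positive definite). -/
noncomputable def chi {V : Type*} [NormedAddCommGroup V] [NormedSpace ℝ V]
    (A : V →L[ℝ] V) : V →L[ℝ] V :=
  PsiMinus A * Ring.inverse (PsiPlus A)

/-!
Both `Ψ⁺(A)` and `Ψ⁻(A)` are sums of real multiples of powers of `A`, so they are self-adjoint
and commute with each other; hence `Ψ⁺(A)⁻¹` is self-adjoint and commutes with `Ψ⁻(A)`, and the
product of two commuting self-adjoint operators is self-adjoint. Neither convergence of the
series nor invertibility of `Ψ⁺(A)` is needed: the junk values (`0` for a divergent `tsum` and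
for `Ring.inverse` of a non-unit) are self-adjoint and commute with everything.
-/

theorem Commute.ringInverse_right {M₀ : Type*} [MonoidWithZero M₀] {a b : M₀}
    (h : Commute a b) : Commute a (Ring.inverse b) := by
  by_cases hb : IsUnit b
  · obtain ⟨u, rfl⟩ := hb
    rw [Ring.inverse_unit]
    exact h.units_inv_right
  · rw [Ring.inverse_non_unit _ hb]
    exact Commute.zero_right a

theorem IsSelfAdjoint.mul_ringInverse_of_commute {R : Type*} [Semiring R] [StarRing R]
    {a b : R} (ha : IsSelfAdjoint a) (hb : IsSelfAdjoint b) (hab : Commute a b) :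
    IsSelfAdjoint (a * Ring.inverse b) :=
  (IsSelfAdjoint.commute_iff ha hb.ringInverse).mp hab.ringInverse_right

theorem IsSelfAdjoint.tsum {α ι : Type*} [AddCommMonoid α] [TopologicalSpace α] [StarAddMonoid α]
    [ContinuousStar α] [T2Space α] {f : ι → α} (hf : ∀ i, IsSelfAdjoint (f i)) :
    IsSelfAdjoint (∑' i, f i) := by
  rw [isSelfAdjoint_iff, tsum_star]
  exact tsum_congr fun i => (hf i).star_eq

section PowerSeries

variable {𝕜 A : Type*} [CommSemiring 𝕜] [Semiring A] [TopologicalSpace A] [T2Space A]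
  [Module 𝕜 A] {a : A}

theorem IsSelfAdjoint.tsum_smul_pow [Star 𝕜] [TrivialStar 𝕜] [StarRing A] [ContinuousStar A]
    [StarModule 𝕜 A] (ha : IsSelfAdjoint a) (c : ℕ → 𝕜) (e : ℕ → ℕ) :
    IsSelfAdjoint (∑' n, c n • a ^ e n) :=
  IsSelfAdjoint.tsum fun n => (IsSelfAdjoint.all (c n)).smul (ha.pow (e n))

theorem commute_tsum_smul_pow [IsTopologicalSemiring A] [SMulCommClass 𝕜 A A]
    [IsScalarTower 𝕜 A A] (a : A) (c d : ℕ → 𝕜) (e f : ℕ → ℕ) :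
    Commute (∑' n, c n • a ^ e n) (∑' n, d n • a ^ f n) :=
  Commute.tsum_left _ fun m => Commute.tsum_right _ fun n =>
    ((Commute.pow_pow_self a (e m) (f n)).smul_left (c m)).smul_right (d n)

end PowerSeries

theorem commute_psiMinus_psiPlus {V : Type*} [NormedAddCommGroup V] [NormedSpace ℝ V]
    (A : V →L[ℝ] V) : Commute (PsiMinus A) (PsiPlus A) :=
  (commute_tsum_smul_pow A _ _ _ _).neg_left

section Psi

variable {V : Type*} [NormedAddCommGroup V] [InnerProductSpace ℝ V] [CompleteSpace V]
  {A : V →L[ℝ] V}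

theorem IsSelfAdjoint.psiPlus (hA : IsSelfAdjoint A) : IsSelfAdjoint (PsiPlus A) :=
  hA.tsum_smul_pow _ _

theorem IsSelfAdjoint.psiMinus (hA : IsSelfAdjoint A) : IsSelfAdjoint (PsiMinus A) :=
  (hA.tsum_smul_pow _ _).neg

theorem IsSelfAdjoint.chi (hA : IsSelfAdjoint A) : IsSelfAdjoint (chi A) :=
  hA.psiMinus.mul_ringInverse_of_commute hA.psiPlus (commute_psiMinus_psiPlus A)

end Psi

/-- If `A` is a self-adjoint endomorphism of a finite-dimensional real inner product space,
then `χ(A) = Ψ⁻(A) ∘ Ψ⁺(A)⁻¹` is self-adjoint. -/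
theorem chi_selfAdjoint {V : Type*} [NormedAddCommGroup V]
    [InnerProductSpace ℝ V] [FiniteDimensional ℝ V] (A : V →L[ℝ] V)
    (hA : ∀ x y : V, ⟪A x, y⟫ = ⟪x, A y⟫) :
    ∀ x y : V, ⟪chi A x, y⟫ = ⟪x, chi A y⟫ :=
  ContinuousLinearMap.isSelfAdjoint_iff_isSymmetric.mp
    (ContinuousLinearMap.isSelfAdjoint_iff_isSymmetric.mpr hA).chi
end

section
/- Let V be a finite-dimensional real inner product space and let A be a self-adjoint linear endomorphism of V. Then every eigenvalue of χ(A) := Ψ⁻(A) ∘ Ψ⁺(A)⁻¹ lies in the open interval (−1, 1): if χ(A) v = μ • v for some nonzero v ∈ V and μ ∈ ℝ, then −1 < μ < 1. -/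
/-!
A self-adjoint `A` has an orthonormal eigenbasis, and on an eigenvector of `A` with eigenvalue `λ`
the series `Ψ⁺(A)` and `Ψ⁻(A)` act as the scalars `ψ⁺(λ) = sinh λ / λ > 0` and
`ψ⁻(λ) = (1 - cosh λ) / λ`. Hence `Ψ⁺(A)` is invertible, `χ(A)` is diagonal in that basis with
entries `ψ⁻(λ) / ψ⁺(λ)`, and every eigenvalue of `χ(A)` is one of these entries. Finally
`|1 - cosh λ| < |sinh λ|` for `λ ≠ 0`, since `cosh t - sinh t = e^{-t} < 1` for `t > 0`.
-/

open scoped RealInnerProductSpace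

open scoped Nat
open Module

theorem Module.Basis.exists_eq_of_hasEigenvalue {ι R M : Type*} [Fintype ι] [DecidableEq ι]
    [CommRing R] [IsDomain R] [AddCommGroup M] [Module R M] [IsTorsionFree R M]
    (b : Basis ι R M) {f : Module.End R M} {d : ι → R} (hf : ∀ i, f (b i) = d i • b i)
    {μ : R} (hμ : f.HasEigenvalue μ) : ∃ i, d i = μ := by
  have hdiag : f = Matrix.toLin b b (Matrix.diagonal d) :=
    b.ext fun i => by simp [hf, Matrix.toLin_self, Matrix.diagonal_apply, ite_smul]
  exact (hasEigenvalue_toLin_diagonal_iff d b).1 (hdiag ▸ hμ)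

namespace ContinuousLinearMap

variable {𝕜 E : Type*} [NontriviallyNormedField 𝕜] [NormedAddCommGroup E] [NormedSpace 𝕜 E]

theorem isUnit_of_apply_basis_eq_smul [CompleteSpace E] [FiniteDimensional 𝕜 E]
    {ι : Type*} [Fintype ι] [DecidableEq ι] (b : Basis ι 𝕜 E) {T : E →L[𝕜] E} {d : ι → 𝕜}
    (hT : ∀ i, T (b i) = d i • b i) (hd : ∀ i, d i ≠ 0) : IsUnit T := by
  rw [← spectrum.zero_notMem_iff 𝕜, spectrum_eq, ← Module.End.hasEigenvalue_iff_mem_spectrum]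
  intro h0
  obtain ⟨i, hi⟩ := b.exists_eq_of_hasEigenvalue (f := (T : E →ₗ[𝕜] E)) hT h0
  exact hd i hi

theorem ring_inverse_apply_of_apply_eq_smul {T : E →L[𝕜] E} (hT : IsUnit T) {x : E} {c : 𝕜}
    (hx : T x = c • x) (hc : c ≠ 0) : Ring.inverse T x = c⁻¹ • x :=
  calc Ring.inverse T x = Ring.inverse T (T (c⁻¹ • x)) := by
        rw [map_smul, hx, smul_smul, inv_mul_cancel₀ hc, one_smul]
    _ = c⁻¹ • x := by rw [← mul_apply_eq_comp, Ring.inverse_mul_cancel _ hT, one_apply_eq_self]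

theorem pow_apply_of_apply_eq_smul {T : E →L[𝕜] E} {x : E} {c : 𝕜} (hx : T x = c • x) (k : ℕ) :
    (T ^ k) x = c ^ k • x := by
  induction k with
  | zero => simp
  | succ k ih => rw [pow_succ, mul_apply_eq_comp, hx, map_smul, ih, smul_smul, pow_succ']

theorem tsum_smul_pow_apply_of_apply_eq_smul {T : E →L[𝕜] E} {x : E} {c : 𝕜}
    (hx : T x = c • x) {f : ℕ → 𝕜} {g : ℕ → ℕ} (hT : Summable fun n => f n • T ^ g n)
    (hc : Summable fun n => f n * c ^ g n) :
    (∑' n, f n • T ^ g n) x = (∑' n, f n * c ^ g n) • x := by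
  rw [← apply_apply x, (apply 𝕜 E x).map_tsum hT, ← hc.tsum_smul_const]
  simp only [apply_apply, smul_apply, pow_apply_of_apply_eq_smul hx, smul_smul]

end ContinuousLinearMap

theorem abs_inv_factorial_succ_le (k : ℕ) : |((k + 1)! : ℝ)⁻¹| ≤ (k ! : ℝ)⁻¹ := by
  rw [abs_of_pos (by positivity)]
  exact inv_anti₀ (by positivity) (mod_cast Nat.factorial_le k.le_succ)

section Series

variable {𝔸 : Type*} [NormedRing 𝔸] [NormedAlgebra ℝ 𝔸] [CompleteSpace 𝔸]

theorem summable_smul_pow_of_abs_le_inv_factorial (a : 𝔸) {f : ℕ → ℝ} {g : ℕ → ℕ}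
    (hg : g.Injective) (hf : ∀ n, |f n| ≤ ((g n)! : ℝ)⁻¹) : Summable fun n => f n • a ^ g n := by
  refine .of_norm_bounded ((NormedSpace.norm_expSeries_summable' (𝕂 := ℝ) a).comp_injective hg)
    fun n => ?_
  simp only [Function.comp_apply, norm_smul, Real.norm_eq_abs]
  exact mul_le_mul_of_nonneg_right ((hf n).trans (le_abs_self _)) (norm_nonneg _)

theorem summable_psiPlus_series (a : 𝔸) :
    Summable fun n : ℕ => ((2 * n + 1)! : ℝ)⁻¹ • a ^ (2 * n) :=
  summable_smul_pow_of_abs_le_inv_factorial a (fun _ _ h => by omega)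
    fun n => abs_inv_factorial_succ_le (2 * n)

theorem summable_psiMinus_series (a : 𝔸) :
    Summable fun n : ℕ => ((2 * n + 2)! : ℝ)⁻¹ • a ^ (2 * n + 1) :=
  summable_smul_pow_of_abs_le_inv_factorial a (fun _ _ h => by omega)
    fun n => abs_inv_factorial_succ_le (2 * n + 1)

end Series

noncomputable def psiPlus (l : ℝ) : ℝ :=
  ∑' n : ℕ, ((2 * n + 1)! : ℝ)⁻¹ * l ^ (2 * n)

noncomputable def psiMinus (l : ℝ) : ℝ :=
  -∑' n : ℕ, ((2 * n + 2)! : ℝ)⁻¹ * l ^ (2 * n + 1)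

theorem mul_psiPlus (l : ℝ) : l * psiPlus l = Real.sinh l := by
  rw [psiPlus, ← tsum_mul_left, ← (Real.hasSum_sinh l).tsum_eq]
  congr 1 with n
  rw [pow_succ]
  ring

theorem mul_psiMinus (l : ℝ) : l * psiMinus l = 1 - Real.cosh l := by
  have hcosh := (Real.hasSum_cosh l).summable.tsum_eq_zero_add
  rw [(Real.hasSum_cosh l).tsum_eq] at hcosh
  rw [psiMinus, mul_neg, ← tsum_mul_left, hcosh]
  simp only [mul_zero, pow_zero, Nat.factorial_zero, Nat.cast_one, div_one, sub_add_cancel_left,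
    neg_inj]
  congr 1 with n
  rw [show 2 * (n + 1) = 2 * n + 1 + 1 by ring, pow_succ]
  ring

theorem psiPlus_pos (l : ℝ) : 0 < psiPlus l := by
  have hterm : ∀ n : ℕ, 0 ≤ ((2 * n + 1)! : ℝ)⁻¹ * l ^ (2 * n) := fun n =>
    mul_nonneg (by positivity) (Even.pow_nonneg (even_two_mul n) l)
  have hsum : Summable fun n : ℕ => ((2 * n + 1)! : ℝ)⁻¹ * l ^ (2 * n) :=
    summable_psiPlus_series l
  exact hsum.tsum_pos hterm 0 (by simp)

theorem psiMinus_zero : psiMinus 0 = 0 := by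
  simp [psiMinus]

theorem abs_psiMinus_lt_psiPlus (l : ℝ) : |psiMinus l| < psiPlus l := by
  rcases eq_or_ne l 0 with rfl | hl
  · simpa [psiMinus_zero] using psiPlus_pos 0
  have hl' : 0 < |l| := abs_pos.2 hl
  rw [← mul_lt_mul_iff_of_pos_left hl', ← abs_mul, ← abs_of_pos (psiPlus_pos l), ← abs_mul,
    mul_psiMinus, mul_psiPlus, abs_sub_comm, abs_of_nonneg (sub_nonneg.2 (Real.one_le_cosh l)),
    ← Real.cosh_abs, Real.abs_sinh]
  have hexp : Real.exp (-|l|) < 1 := Real.exp_lt_one_iff.2 (neg_neg_of_pos hl')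
  linarith [Real.cosh_sub_sinh |l|]

theorem abs_psiMinus_div_psiPlus_lt_one (l : ℝ) : |psiMinus l / psiPlus l| < 1 := by
  rw [abs_div, abs_of_pos (psiPlus_pos l), div_lt_one (psiPlus_pos l)]
  exact abs_psiMinus_lt_psiPlus l

section Operator

variable {V : Type*} [NormedAddCommGroup V] [NormedSpace ℝ V] [CompleteSpace V]
  {A : V →L[ℝ] V} {x : V} {l : ℝ}

theorem PsiPlus_apply_of_apply_eq_smul (hx : A x = l • x) : PsiPlus A x = psiPlus l • x :=
  ContinuousLinearMap.tsum_smul_pow_apply_of_apply_eq_smul hx (summable_psiPlus_series A)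
    (summable_psiPlus_series l)

theorem PsiMinus_apply_of_apply_eq_smul (hx : A x = l • x) : PsiMinus A x = psiMinus l • x := by
  rw [PsiMinus, neg_apply, psiMinus, neg_smul,
    ContinuousLinearMap.tsum_smul_pow_apply_of_apply_eq_smul hx (summable_psiMinus_series A)
      (summable_psiMinus_series l)]

theorem chi_apply_of_apply_eq_smul (hA : IsUnit (PsiPlus A)) (hx : A x = l • x) :
    chi A x = (psiMinus l / psiPlus l) • x := by
  rw [chi, mul_apply_eq_comp, ContinuousLinearMap.ring_inverse_apply_of_apply_eq_smul hA
    (PsiPlus_apply_of_apply_eq_smul hx) (psiPlus_pos l).ne', map_smul,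
    PsiMinus_apply_of_apply_eq_smul hx, smul_smul, div_eq_inv_mul]

end Operator

/-- Every eigenvalue of `χ(A) := Ψ⁻(A) ∘ Ψ⁺(A)⁻¹` lies in the open interval `(−1, 1)`,
when `A` is a self-adjoint endomorphism of a finite-dimensional real inner product space. -/
theorem chi_eigenvalues_mem_Ioo {V : Type*} [NormedAddCommGroup V]
    [InnerProductSpace ℝ V] [FiniteDimensional ℝ V] (A : V →L[ℝ] V)
    (hA : ∀ x y : V, ⟪A x, y⟫ = ⟪x, A y⟫)
    (v : V) (hv : v ≠ 0) (μ : ℝ) (hμ : chi A v = μ • v) :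
    -1 < μ ∧ μ < 1 := by
  have hsymm : (A : V →ₗ[ℝ] V).IsSymmetric := hA
  let b := hsymm.eigenvectorBasis rfl
  let lam := hsymm.eigenvalues rfl
  have heig (i) : A (b i) = lam i • b i := hsymm.apply_eigenvectorBasis rfl i
  have hunit : IsUnit (PsiPlus A) :=
    ContinuousLinearMap.isUnit_of_apply_basis_eq_smul b.toBasis
      (by simpa using fun i => PsiPlus_apply_of_apply_eq_smul (heig i))
      fun i => (psiPlus_pos (lam i)).ne'
  have hchi (i) : chi A (b i) = (psiMinus (lam i) / psiPlus (lam i)) • b i :=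
    chi_apply_of_apply_eq_smul hunit (heig i)
  obtain ⟨i, rfl⟩ := b.toBasis.exists_eq_of_hasEigenvalue (f := (chi A : V →ₗ[ℝ] V))
    (by simpa using hchi) (Module.End.hasEigenvalue_of_hasEigenvector
      ⟨Module.End.mem_eigenspace_iff.2 hμ, hv⟩)
  exact abs_lt.1 (abs_psiMinus_div_psiPlus_lt_one (lam i))
end

section
/- Let V be a finite-dimensional real inner product space and A a self-adjoint linear endomorphism of V. Then ‖χ(A) w‖ ≤ ‖w‖ for all w ∈ V, where χ(A) := Ψ⁻(A) ∘ Ψ⁺(A)⁻¹. -/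
open scoped RealInnerProductSpace

/-!
Diagonalise `A` in an orthonormal eigenbasis. On an eigenvector with eigenvalue `t` the two series
act by scalars: `t Ψ⁺(t) = sinh t` and `t Ψ⁻(t) = 1 - cosh t`, so `Ψ⁺(A)` is invertible and
`χ(A)` acts by `(1 - cosh t) / sinh t = -tanh (t / 2)`, of modulus less than one. An operator that
is diagonal in an orthonormal basis with entries of modulus at most one is a contraction.
-/

open scoped Nat

lemma abs_inv_factorial_le {m k : ℕ} (h : m ≤ k) : |((k ! : ℝ))⁻¹| ≤ ((m ! : ℝ))⁻¹ := by
  rw [abs_of_pos (by positivity)]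
  exact inv_anti₀ (by positivity) (by exact_mod_cast Nat.factorial_le h)

lemma summable_smul_pow {𝔸 : Type*} [NormedRing 𝔸] [NormedAlgebra ℝ 𝔸] [CompleteSpace 𝔸]
    (x : 𝔸) {c : ℕ → ℝ} {j : ℕ → ℕ} (hj : j.Injective) (hc : ∀ n, |c n| ≤ ((j n)! : ℝ)⁻¹) :
    Summable fun n => c n • x ^ j n := by
  refine .of_norm_bounded ((NormedSpace.norm_expSeries_summable' (𝕂 := ℝ) x).comp_injective hj)
    fun n => ?_
  simp only [Function.comp_apply, norm_smul, Real.norm_eq_abs, abs_inv, Nat.abs_cast]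
  gcongr
  simpa using hc n

lemma tsum_smul_pow_apply_of_apply_eq_smul {V : Type*} [NormedAddCommGroup V] [NormedSpace ℝ V]
    [CompleteSpace V] {A : V →L[ℝ] V} {t : ℝ} {v : V} (hv : A v = t • v) {c : ℕ → ℝ}
    {j : ℕ → ℕ} (hj : j.Injective) (hc : ∀ n, |c n| ≤ ((j n)! : ℝ)⁻¹) :
    (∑' n, c n • A ^ j n) v = (∑' n, c n * t ^ j n) • v := by
  have hpow (m : ℕ) : (A ^ m) v = t ^ m • v := by
    induction m with
    | zero => simp
    | succ m ih =>
      rw [pow_succ', mul_apply_eq_comp, ih, map_smul, hv, smul_smul, pow_succ]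
  have happly := (ContinuousLinearMap.apply ℝ V v).map_tsum (summable_smul_pow A hj hc)
  simp only [ContinuousLinearMap.apply_apply, smul_apply, hpow, smul_smul] at happly
  rw [happly]
  exact (summable_smul_pow t hj hc).tsum_smul_const v

noncomputable def psiPlusReal (t : ℝ) : ℝ :=
  ∑' n : ℕ, (((2 * n + 1)! : ℝ))⁻¹ * t ^ (2 * n)

noncomputable def psiMinusReal (t : ℝ) : ℝ :=
  -∑' n : ℕ, (((2 * n + 2)! : ℝ))⁻¹ * t ^ (2 * n + 1)

lemma mul_psiPlusReal (t : ℝ) : t * psiPlusReal t = Real.sinh t := by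
  rw [psiPlusReal, ← tsum_mul_left, Real.sinh_eq_tsum]
  congr 1 with n
  field_simp
  ring

lemma mul_psiMinusReal (t : ℝ) : t * psiMinusReal t = 1 - Real.cosh t := by
  have h := (Real.hasSum_cosh t).summable.tsum_eq_zero_add
  simp only [Real.cosh_eq_tsum] at h ⊢
  rw [psiMinusReal, mul_neg, ← tsum_mul_left, h]
  have hterm (n : ℕ) : t ^ (2 * (n + 1)) / ((2 * (n + 1))! : ℝ)
      = t * ((((2 * n + 2)! : ℝ))⁻¹ * t ^ (2 * n + 1)) := by
    rw [show 2 * (n + 1) = 2 * n + 1 + 1 by ring, pow_succ]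
    field_simp
  simp [hterm]

lemma one_le_psiPlusReal (t : ℝ) : 1 ≤ psiPlusReal t := by
  have hsum : Summable fun n : ℕ => (((2 * n + 1)! : ℝ))⁻¹ * t ^ (2 * n) :=
    summable_smul_pow t (j := fun n => 2 * n) (fun a b h => by simpa using h)
      fun n => abs_inv_factorial_le (by omega)
  have h := hsum.le_tsum 0 fun n _ => by rw [pow_mul]; positivity
  simpa [psiPlusReal] using h

lemma psiPlusReal_pos (t : ℝ) : 0 < psiPlusReal t :=
  zero_lt_one.trans_le (one_le_psiPlusReal t)

lemma abs_psiMinusReal_le_psiPlusReal (t : ℝ) : |psiMinusReal t| ≤ psiPlusReal t := by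
  rcases eq_or_ne t 0 with rfl | ht
  · simpa [psiMinusReal] using (psiPlusReal_pos 0).le
  refine abs_le_of_sq_le_sq (le_of_mul_le_mul_left ?_ (by positivity : 0 < t ^ 2))
    (psiPlusReal_pos t).le
  rw [← mul_pow, ← mul_pow, mul_psiPlusReal, mul_psiMinusReal]
  -- `(1 - cosh t)² ≤ cosh² t - 1 = sinh² t` because `cosh t ≥ 1`
  nlinarith [Real.cosh_sq t, Real.one_le_cosh t]

lemma abs_psiMinusReal_div_psiPlusReal_le_one (t : ℝ) :
    |psiMinusReal t / psiPlusReal t| ≤ 1 := by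
  rw [abs_div, abs_of_pos (psiPlusReal_pos t), div_le_one (psiPlusReal_pos t)]
  exact abs_psiMinusReal_le_psiPlusReal t

section Eigenvector

variable {V : Type*} [NormedAddCommGroup V] [NormedSpace ℝ V] [CompleteSpace V]
  {A : V →L[ℝ] V} {t : ℝ} {v : V}

lemma psiPlus_apply_of_apply_eq_smul (hv : A v = t • v) : PsiPlus A v = psiPlusReal t • v :=
  tsum_smul_pow_apply_of_apply_eq_smul hv (j := fun n => 2 * n) (fun a b h => by simpa using h)
    fun n => abs_inv_factorial_le (by omega)

lemma psiMinus_apply_of_apply_eq_smul (hv : A v = t • v) : PsiMinus A v = psiMinusReal t • v := by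
  rw [PsiMinus, neg_apply, psiMinusReal, neg_smul,
    tsum_smul_pow_apply_of_apply_eq_smul hv (j := fun n => 2 * n + 1)
      (fun a b h => by simpa using h) fun n => abs_inv_factorial_le (by omega)]

lemma chi_apply_of_apply_eq_smul_s6 (hunit : IsUnit (PsiPlus A)) (hv : A v = t • v) :
    chi A v = (psiMinusReal t / psiPlusReal t) • v := by
  have hplus : psiPlusReal t ≠ 0 := (psiPlusReal_pos t).ne'
  have hinv : Ring.inverse (PsiPlus A) v = (psiPlusReal t)⁻¹ • v := by
    calc Ring.inverse (PsiPlus A) v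
        = (psiPlusReal t)⁻¹ • (Ring.inverse (PsiPlus A) * PsiPlus A) v := by
          rw [mul_apply_eq_comp, psiPlus_apply_of_apply_eq_smul hv, map_smul, smul_smul,
            inv_mul_cancel₀ hplus, one_smul]
      _ = (psiPlusReal t)⁻¹ • v := by
          rw [Ring.inverse_mul_cancel _ hunit, one_apply_eq_self]
  rw [chi, mul_apply_eq_comp, hinv, map_smul, psiMinus_apply_of_apply_eq_smul hv, smul_smul,
    div_eq_inv_mul]

end Eigenvector

lemma ContinuousLinearMap.isUnit_of_apply_basis_eq_smul_s6 {𝕜 V ι : Type*}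
    [NontriviallyNormedField 𝕜] [CompleteSpace 𝕜] [NormedAddCommGroup V] [NormedSpace 𝕜 V]
    [FiniteDimensional 𝕜 V] (b : Module.Basis ι 𝕜 V) {T : V →L[𝕜] V} {d : ι → 𝕜}
    (hT : ∀ i, T (b i) = d i • b i) (hd : ∀ i, d i ≠ 0) : IsUnit T := by
  have := FiniteDimensional.complete 𝕜 V
  rw [ContinuousLinearMap.isUnit_iff_isUnit_toLinearMap, LinearMap.isUnit_iff_range_eq_top,
    eq_top_iff, ← b.span_eq, Submodule.span_le, Set.range_subset_iff]
  intro i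
  refine ⟨(d i)⁻¹ • b i, ?_⟩
  rw [ContinuousLinearMap.coe_coe, map_smul, hT, smul_smul, inv_mul_cancel₀ (hd i), one_smul]

lemma OrthonormalBasis.norm_apply_le_of_apply_eq_smul {ι V : Type*} [Fintype ι]
    [NormedAddCommGroup V] [InnerProductSpace ℝ V] (b : OrthonormalBasis ι ℝ V)
    {T : V →L[ℝ] V} {c : ι → ℝ} (hT : ∀ i, T (b i) = c i • b i) (hc : ∀ i, |c i| ≤ 1) (w : V) :
    ‖T w‖ ≤ ‖w‖ := by
  have hTw : T w = ∑ i, (c i * ⟪b i, w⟫) • b i := by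
    conv_lhs => rw [← b.sum_repr' w]
    simp only [map_sum, map_smul, hT, smul_smul, mul_comm]
  have hcoord (i : ι) : ⟪b i, T w⟫ = c i * ⟪b i, w⟫ := by
    rw [hTw, b.orthonormal.inner_right_fintype]
  refine (pow_le_pow_iff_left₀ (norm_nonneg _) (norm_nonneg _) two_ne_zero).mp ?_
  rw [← b.sum_sq_inner_right, ← b.sum_sq_inner_right]
  refine Finset.sum_le_sum fun i _ => ?_
  rw [hcoord, mul_pow]
  exact mul_le_of_le_one_left (sq_nonneg _) ((sq_le_one_iff_abs_le_one _).mpr (hc i))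

/-- If `A` is a self-adjoint endomorphism of a finite-dimensional real inner product space,
then `χ(A) := Ψ⁻(A) ∘ Ψ⁺(A)⁻¹` is a contraction: `‖χ(A) w‖ ≤ ‖w‖` for all `w`. -/
theorem chi_norm_le {V : Type*} [NormedAddCommGroup V]
    [InnerProductSpace ℝ V] [FiniteDimensional ℝ V] (A : V →L[ℝ] V)
    (hA : ∀ x y : V, ⟪A x, y⟫ = ⟪x, A y⟫) :
    ∀ w : V, ‖chi A w‖ ≤ ‖w‖ := by
  have hsymm : (A : V →ₗ[ℝ] V).IsSymmetric := hA
  let b := hsymm.eigenvectorBasis rfl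
  have hb (i) : A (b i) = hsymm.eigenvalues rfl i • b i := hsymm.apply_eigenvectorBasis rfl i
  have hunit : IsUnit (PsiPlus A) :=
    ContinuousLinearMap.isUnit_of_apply_basis_eq_smul_s6 b.toBasis
      (fun i => by simpa using psiPlus_apply_of_apply_eq_smul (hb i))
      fun i => (psiPlusReal_pos _).ne'
  exact b.norm_apply_le_of_apply_eq_smul (fun i => chi_apply_of_apply_eq_smul_s6 hunit (hb i))
    fun i => abs_psiMinusReal_div_psiPlusReal_le_one _
end

section
/- Let V be a finite-dimensional real inner product space and A a self-adjoint linear endomorphism of V. Then for every w ∈ V, ⟨((exp(A) + exp(−A))/2) w, w⟩ − ⟨w, w⟩ ≥ (1/2)‖A w‖², where exp denotes the exponential of endomorphisms. -/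
/-!
Summing the exponential series of `A` and `-A`, the odd terms cancel and
`cosh A = ∑ₖ A ^ (2k) / (2k)!`. Self-adjointness turns `⟪A ^ (2k) w, w⟫` into `‖A ^ k w‖ ^ 2 ≥ 0`,
so `⟪cosh A w, w⟫` is at least the sum of its terms `k = 0, 1`, namely `‖w‖ ^ 2 + ‖A w‖ ^ 2 / 2`.
-/

open scoped RealInnerProductSpace Nat
open NormedSpace

theorem hasSum_cosh_series {𝔸 : Type*} [NormedRing 𝔸] [NormedAlgebra ℝ 𝔸] [CompleteSpace 𝔸]
    (a : 𝔸) :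
    HasSum (fun k : ℕ => ((2 * k)! : ℝ)⁻¹ • a ^ (2 * k)) ((1 / 2 : ℝ) • (exp a + exp (-a))) := by
  have hsum := ((exp_series_hasSum_exp' (𝕂 := ℝ) a).add
    (exp_series_hasSum_exp' (𝕂 := ℝ) (-a))).const_smul (1 / 2 : ℝ)
  have hodd : ∀ n ∉ Set.range (2 * ·),
      (1 / 2 : ℝ) • ((n ! : ℝ)⁻¹ • a ^ n + (n ! : ℝ)⁻¹ • (-a) ^ n) = 0 := by
    intro n hn
    have hn_odd : Odd n := Nat.not_even_iff_odd.mp fun ⟨k, hk⟩ => hn ⟨k, by simp only; omega⟩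
    simp [hn_odd.neg_pow]
  convert ((mul_right_injective₀ two_ne_zero).hasSum_iff hodd).mpr hsum using 1
  ext k
  simp only [Function.comp_apply, (even_two_mul k).neg_pow, ← two_smul ℝ, smul_smul]
  congr 1
  ring

theorem inner_pow_two_mul_apply_self {V : Type*} [NormedAddCommGroup V] [InnerProductSpace ℝ V]
    {A : V →L[ℝ] V} (hA : (A : V →ₗ[ℝ] V).IsSymmetric) (k : ℕ) (w : V) :
    ⟪(A ^ (2 * k)) w, w⟫ = ‖(A ^ k) w‖ ^ 2 := by
  have hAk := hA.pow k
  rw [← ContinuousLinearMap.toLinearMap_pow] at hAk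
  rw [two_mul, pow_add, mul_apply_eq_comp, ← real_inner_self_eq_norm_sq]
  exact hAk _ _

theorem hasSum_inner_cosh_apply_self {V : Type*} [NormedAddCommGroup V] [InnerProductSpace ℝ V]
    [CompleteSpace V] {A : V →L[ℝ] V} (hA : (A : V →ₗ[ℝ] V).IsSymmetric) (w : V) :
    HasSum (fun k : ℕ => ‖(A ^ k) w‖ ^ 2 / (2 * k)!)
      ⟪(((1 : ℝ) / 2) • (exp A + exp (-A))) w, w⟫ := by
  rw [← real_inner_comm]
  refine ((hasSum_cosh_series A).mapL
    ((innerSL ℝ w).comp (ContinuousLinearMap.apply ℝ V w))).congr_fun fun k => ?_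
  simp only [ContinuousLinearMap.comp_apply, map_smul, ContinuousLinearMap.apply_apply,
    innerSL_apply_apply, smul_eq_mul, real_inner_comm _ w, inner_pow_two_mul_apply_self hA,
    div_eq_inv_mul]

/-- For a self-adjoint endomorphism `A` of a finite-dimensional real inner product space
and every `w`, `⟨cosh(A) w, w⟩ − ⟨w, w⟩ ≥ (1/2)‖A w‖²`, where
`cosh(A) = (exp(A) + exp(−A))/2`. -/
theorem inner_cosh_sub_inner_ge {V : Type*} [NormedAddCommGroup V]
    [InnerProductSpace ℝ V] [FiniteDimensional ℝ V] (A : V →L[ℝ] V)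
    (hA : ∀ x y : V, ⟪A x, y⟫ = ⟪x, A y⟫) :
    ∀ w : V,
      ⟪(((1 : ℝ) / 2) • (NormedSpace.exp A + NormedSpace.exp (-A))) w, w⟫ - ⟪w, w⟫ ≥
        (1 / 2) * ‖A w‖ ^ 2 := by
  intro w
  have hle := sum_le_hasSum (Finset.range 2) (fun k _ => by positivity)
    (hasSum_inner_cosh_apply_self hA w)
  have hsum : ∑ k ∈ Finset.range 2, ‖(A ^ k) w‖ ^ 2 / (2 * k)! = ⟪w, w⟫ + ‖A w‖ ^ 2 / 2 := by
    simp [Finset.sum_range_succ]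
  linarith
end

section
/- Let g be a finite-dimensional real Lie algebra equipped with an inner product ⟨·,·⟩, and suppose g = k ⊕ p is an orthogonal direct sum of subspaces with [k,k] ⊆ k, [p,p] ⊆ k and [k,p] ⊆ p. Let z₀ ∈ k with ad(z₀) skew-adjoint, and let Z ∈ p with ad(Z) self-adjoint and [z₀,[z₀,Z]] = −Z. Then ⟨exp(−ad(Z)) z₀, z₀⟩ − ⟨z₀, z₀⟩ ≥ (1/2)⟨Z, Z⟩, where exp denotes the exponential of endomorphisms. -/
/-!
Put `T = -ad Z`. It is self-adjoint and swaps `k` and `p`, so the odd moments `⟪Tⁿ z₀, z₀⟫`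
vanish (`Tⁿ z₀ ∈ p ⟂ k`) and the even ones are `‖Tᵐ z₀‖² ≥ 0`. Hence every term of the series
`⟪exp T z₀, z₀⟫ = ∑ ⟪Tⁿ z₀, z₀⟫ / n!` is nonnegative, and it is at least its terms `n = 0, 2`,
namely `⟪z₀, z₀⟫ + ‖[z₀, Z]‖² / 2`. Skew-adjointness of `ad z₀` and `[z₀,[z₀,Z]] = -Z` give
`‖[z₀, Z]‖² = ⟪Z, Z⟫`.
-/

open scoped RealInnerProductSpace

open Set in
theorem Set.MapsTo.iterate_two_mul_add_one {α : Type*} {f : α → α} {s t : Set α}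
    (hst : MapsTo f s t) (hts : MapsTo f t s) (n : ℕ) : MapsTo f^[2 * n + 1] s t := by
  rw [Function.iterate_succ', Function.iterate_mul]
  exact hst.comp ((hts.comp hst).iterate n)

section

variable {E : Type*} [NormedAddCommGroup E] [InnerProductSpace ℝ E] [CompleteSpace E]

theorem IsSelfAdjoint.inner_pow_two_mul_apply_self {T : E →L[ℝ] E} (hT : IsSelfAdjoint T)
    (m : ℕ) (x : E) : ⟪(T ^ (2 * m)) x, x⟫ = ⟪(T ^ m) x, (T ^ m) x⟫ := by
  rw [two_mul, pow_add]
  exact (hT.pow m).isSymmetric _ _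

theorem IsSelfAdjoint.inner_pow_apply_self_nonneg_of_mapsTo {T : E →L[ℝ] E}
    (hT : IsSelfAdjoint T) {k p : Submodule ℝ E} (hkp : k ⟂ p) (hTk : Set.MapsTo T k p)
    (hTp : Set.MapsTo T p k) {x : E} (hx : x ∈ k) (n : ℕ) : 0 ≤ ⟪(T ^ n) x, x⟫ := by
  obtain ⟨m, rfl | rfl⟩ := Nat.even_or_odd' n
  · rw [hT.inner_pow_two_mul_apply_self]
    exact real_inner_self_nonneg
  · have hodd : (T ^ (2 * m + 1)) x ∈ p := by
      rw [FunLike.coe_pow_eq_iterate]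
      exact hTk.iterate_two_mul_add_one hTp m hx
    exact (hkp.symm.inner_eq hodd hx).ge

theorem hasSum_inner_exp_apply (T : E →L[ℝ] E) (x y : E) :
    HasSum (fun n => (n.factorial : ℝ)⁻¹ * ⟪(T ^ n) x, y⟫) ⟪NormedSpace.exp T x, y⟫ := by
  have := (NormedSpace.exp_series_hasSum_exp' (𝕂 := ℝ) T).mapL
    ((innerSL ℝ y).comp (ContinuousLinearMap.apply ℝ E x))
  simpa [real_inner_comm y, inner_smul_left] using this

theorem inner_exp_apply_self_ge (T : E →L[ℝ] E) (x : E) (hmom : ∀ n : ℕ, 0 ≤ ⟪(T ^ n) x, x⟫) :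
    ⟪x, x⟫ + ⟪(T ^ 2) x, x⟫ / 2 ≤ ⟪NormedSpace.exp T x, x⟫ := by
  have := sum_le_hasSum {0, 2} (fun n _ => mul_nonneg (by positivity) (hmom n))
    (hasSum_inner_exp_apply T x x)
  rw [Finset.sum_pair two_ne_zero.symm] at this
  simpa [add_comm, mul_comm, div_eq_inv_mul] using this

end

theorem inner_self_apply_eq_of_skew_of_apply_apply_eq_neg {E : Type*} [NormedAddCommGroup E]
    [InnerProductSpace ℝ E] {D : E →ₗ[ℝ] E} (hD : ∀ x y, ⟪D x, y⟫ = -⟪x, D y⟫) {w : E}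
    (hw : D (D w) = -w) : ⟪D w, D w⟫ = ⟪w, w⟫ := by
  rw [hD, hw, inner_neg_right, neg_neg]

theorem exp_neg_ad_inner_ge_general {L : Type*}
    [NormedAddCommGroup L] [InnerProductSpace ℝ L] [FiniteDimensional ℝ L]
    (br : L →ₗ[ℝ] L →ₗ[ℝ] L)
    (halt : ∀ x : L, br x x = 0)
    (k p : Submodule ℝ L)
    (horth : ∀ x ∈ k, ∀ y ∈ p, ⟪x, y⟫ = 0)
    (hpp : ∀ x ∈ p, ∀ y ∈ p, br x y ∈ k)
    (hkp : ∀ x ∈ k, ∀ y ∈ p, br x y ∈ p)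
    (z₀ : L) (hz₀ : z₀ ∈ k)
    (hz₀skew : ∀ x y : L, ⟪br z₀ x, y⟫ = -⟪x, br z₀ y⟫)
    (Z : L) (hZ : Z ∈ p)
    (hZsa : ∀ x y : L, ⟪br Z x, y⟫ = ⟪x, br Z y⟫)
    (hzzZ : br z₀ (br z₀ Z) = -Z) :
    ⟪NormedSpace.exp (-(LinearMap.toContinuousLinearMap (br Z))) z₀, z₀⟫ - ⟪z₀, z₀⟫ ≥
      (1 / 2) * ⟪Z, Z⟫ := by
  set T := -LinearMap.toContinuousLinearMap (br Z)
  have hT_apply (x : L) : T x = br x Z := LinearMap.IsAlt.neg halt Z x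
  have hT : IsSelfAdjoint T :=
    (LinearMap.IsSymmetric.isSelfAdjoint (A := LinearMap.toContinuousLinearMap (br Z)) hZsa).neg
  have hTk : Set.MapsTo T k p := fun x hx => (hT_apply x).symm ▸ hkp x hx Z hZ
  have hTp : Set.MapsTo T p k := fun x hx => k.neg_mem (hpp Z hZ x hx)
  have hT_sq : ⟪(T ^ 2) z₀, z₀⟫ = ⟪Z, Z⟫ :=
    calc ⟪(T ^ 2) z₀, z₀⟫ = ⟪T z₀, T z₀⟫ := by simpa using hT.inner_pow_two_mul_apply_self 1 z₀
      _ = ⟪br z₀ Z, br z₀ Z⟫ := by rw [hT_apply]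
      _ = ⟪Z, Z⟫ := inner_self_apply_eq_of_skew_of_apply_apply_eq_neg hz₀skew hzzZ
  have hk_ortho_p : k ⟂ p := Submodule.isOrtho_iff_inner_eq.mpr horth
  have := inner_exp_apply_self_ge T z₀
    (hT.inner_pow_apply_self_nonneg_of_mapsTo hk_ortho_p hTk hTp hz₀)
  linarith

/-- Lemma 4.2 of the paper: if `g = k ⊕ p` is an orthogonal decomposition of a
finite-dimensional real Lie algebra `g` (with Lie bracket the bilinear map `br`
satisfying the alternating and Jacobi identities) equipped with an inner product,
with `[k,k] ⊆ k`, `[p,p] ⊆ k`, `[k,p] ⊆ p`, if `z₀ ∈ k` has skew-adjoint `ad` and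
`Z ∈ p` has self-adjoint `ad` and satisfies `[z₀,[z₀,Z]] = −Z`,
then `⟨exp(−ad Z) z₀, z₀⟩ − ⟨z₀, z₀⟩ ≥ (1/2)⟨Z, Z⟩`. -/
theorem exp_neg_ad_inner_ge {L : Type*}
    [NormedAddCommGroup L] [InnerProductSpace ℝ L] [FiniteDimensional ℝ L]
    (br : L →ₗ[ℝ] L →ₗ[ℝ] L)
    (halt : ∀ x : L, br x x = 0)
    (hjac : ∀ x y z : L, br x (br y z) = br (br x y) z + br y (br x z))
    (k p : Submodule ℝ L) (hcompl : IsCompl k p)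
    (horth : ∀ x ∈ k, ∀ y ∈ p, ⟪x, y⟫ = 0)
    (hkk : ∀ x ∈ k, ∀ y ∈ k, br x y ∈ k)
    (hpp : ∀ x ∈ p, ∀ y ∈ p, br x y ∈ k)
    (hkp : ∀ x ∈ k, ∀ y ∈ p, br x y ∈ p)
    (z₀ : L) (hz₀ : z₀ ∈ k)
    (hz₀skew : ∀ x y : L, ⟪br z₀ x, y⟫ = -⟪x, br z₀ y⟫)
    (Z : L) (hZ : Z ∈ p)
    (hZsa : ∀ x y : L, ⟪br Z x, y⟫ = ⟪x, br Z y⟫)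
    (hzzZ : br z₀ (br z₀ Z) = -Z) :
    ⟪NormedSpace.exp (-(LinearMap.toContinuousLinearMap (br Z))) z₀, z₀⟫ - ⟪z₀, z₀⟫ ≥
      (1 / 2) * ⟪Z, Z⟫ :=
  exp_neg_ad_inner_ge_general br halt k p horth hpp hkp z₀ hz₀ hz₀skew Z hZ hZsa hzzZ
end

section
/- Let g be a finite-dimensional real Lie algebra equipped with an inner product ⟨·,·⟩. Let z₀, Z ∈ g be such that ad(Z) is self-adjoint, ad(z₀) is skew-adjoint, and [z₀,[z₀,Z]] = −Z. Then ⟨z₀, [[z₀,Z],Z]⟩ = ⟨Z, Z⟩. -/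
open scoped RealInnerProductSpace

theorem inner_br_br_eq_inner_self_of_isSelfAdjoint {L : Type*}
    [NormedAddCommGroup L] [InnerProductSpace ℝ L] {br : L →ₗ[ℝ] L →ₗ[ℝ] L} (halt : br.IsAlt)
    {x Z : L} (hZsa : ∀ a b : L, ⟪br Z a, b⟫ = ⟪a, br Z b⟫) :
    ⟪x, br (br x Z) Z⟫ = ⟪br x Z, br x Z⟫ := by
  rw [← halt.neg Z (br x Z), inner_neg_right, ← hZsa, ← halt.neg x Z, inner_neg_left, neg_neg]

theorem inner_br_br_eq_general {L : Type*}
    [NormedAddCommGroup L] [InnerProductSpace ℝ L]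
    (br : L →ₗ[ℝ] L →ₗ[ℝ] L)
    (halt : ∀ x : L, br x x = 0)
    (z₀ Z : L)
    (hZsa : ∀ x y : L, ⟪br Z x, y⟫ = ⟪x, br Z y⟫)
    (hz₀skew : ∀ x y : L, ⟪br z₀ x, y⟫ = -⟪x, br z₀ y⟫)
    (hzzZ : br z₀ (br z₀ Z) = -Z) :
    ⟪z₀, br (br z₀ Z) Z⟫ = ⟪Z, Z⟫ := by
  calc ⟪z₀, br (br z₀ Z) Z⟫
      = ⟪br z₀ Z, br z₀ Z⟫ := inner_br_br_eq_inner_self_of_isSelfAdjoint halt hZsa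
    _ = -⟪Z, br z₀ (br z₀ Z)⟫ := hz₀skew _ _
    _ = ⟪Z, Z⟫ := by rw [hzzZ, inner_neg_right, neg_neg]

/-- Lemma 4.3 of the paper: in a finite-dimensional real Lie algebra (with Lie bracket
the bilinear map `br` satisfying the alternating and Jacobi identities) equipped with an
inner product, if `ad Z` is self-adjoint, `ad z₀` is skew-adjoint and
`[z₀,[z₀,Z]] = −Z`, then `⟨z₀, [[z₀,Z],Z]⟩ = ⟨Z, Z⟩`. -/
theorem inner_br_br_eq {L : Type*}
    [NormedAddCommGroup L] [InnerProductSpace ℝ L] [FiniteDimensional ℝ L]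
    (br : L →ₗ[ℝ] L →ₗ[ℝ] L)
    (halt : ∀ x : L, br x x = 0)
    (hjac : ∀ x y z : L, br x (br y z) = br (br x y) z + br y (br x z))
    (z₀ Z : L)
    (hZsa : ∀ x y : L, ⟪br Z x, y⟫ = ⟪x, br Z y⟫)
    (hz₀skew : ∀ x y : L, ⟪br z₀ x, y⟫ = -⟪x, br z₀ y⟫)
    (hzzZ : br z₀ (br z₀ Z) = -Z) :
    ⟪z₀, br (br z₀ Z) Z⟫ = ⟪Z, Z⟫ :=
  inner_br_br_eq_general br halt z₀ Z hZsa hz₀skew hzzZ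
end
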